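/- Let λ, p ∈ (0,1), ν = ν_λ^p. Suppose x ∈ I_λ has a unique expansion i and dist(F_β^n x, C_λ) ≥ δ > 0 for all n. If the frequency r = freq₀(i) exists, then the local dimension d(ν,x) = lim_{ρ→0} log ν(B(x,ρ))/log ρ exists and equals (r·log p + (1−r)·log(1−p)) / log λ. -/

import Mathlib

open MeasureTheory

noncomputable section

def binSeq (i : ℕ → ℕ) : Prop := ∀ n, i n ≤ 1

def piL (l : ℝ) (i : ℕ → ℕ) : ℝ := ∑' n : ℕ, (i n : ℝ) * l ^ (n + 1)

def shiftN (i : ℕ → ℕ) (n : ℕ) : ℕ → ℕ := fun m => i (m + n)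

def countZeros (i : ℕ → ℕ) (n : ℕ) : ℕ := ((Finset.range n).filter fun m => i m = 0).card

/-! Self-similarity at a point whose orbit stays `δ`-away from the overlap of the two first-level
images shows that the ball of radius `δ λⁿ` about `x` has mass exactly `p^{ℓ₀(n)} (1-p)^{ℓ₁(n)}`
times the mass of a `δ`-ball about a point of `I_λ`, and the latter lies between a constant
`c_δ > 0` and `1`. Taking logarithms and dividing by `n`, the frequency `r` gives the dimension
along the radii `δ λⁿ`; monotonicity of `ρ ↦ ν(B(x, ρ))` interpolates between consecutive radii. -/

open Filter Topology Real Metric Set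

section Expansion

variable {l : ℝ} {j : ℕ → ℕ}

lemma hasSum_pow_succ_geometric (hl0 : 0 ≤ l) (hl1 : l < 1) :
    HasSum (fun n : ℕ => l ^ (n + 1)) (l / (1 - l)) := by
  simpa only [pow_succ', div_eq_mul_inv] using (hasSum_geometric_of_lt_one hl0 hl1).mul_left l

lemma piL_term_le (hl0 : 0 ≤ l) (hj : binSeq j) (n : ℕ) :
    (j n : ℝ) * l ^ (n + 1) ≤ l ^ (n + 1) :=
  mul_le_of_le_one_left (by positivity) (by exact_mod_cast hj n)

lemma summable_piL (hl0 : 0 ≤ l) (hl1 : l < 1) (hj : binSeq j) :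
    Summable (fun n : ℕ => (j n : ℝ) * l ^ (n + 1)) :=
  .of_nonneg_of_le (fun n => by positivity) (piL_term_le hl0 hj)
    (hasSum_pow_succ_geometric hl0 hl1).summable

lemma piL_mem_Icc (hl0 : 0 ≤ l) (hl1 : l < 1) (hj : binSeq j) :
    piL l j ∈ Icc 0 (l / (1 - l)) :=
  ⟨tsum_nonneg fun n => by positivity, hasSum_le (piL_term_le hl0 hj)
    (summable_piL hl0 hl1 hj).hasSum (hasSum_pow_succ_geometric hl0 hl1)⟩

@[simp] lemma shiftN_zero (j : ℕ → ℕ) : shiftN j 0 = j := rfl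

@[simp] lemma shiftN_apply_zero (j : ℕ → ℕ) (n : ℕ) : shiftN j n 0 = j n := by
  simp [shiftN]

lemma shiftN_shiftN_one (j : ℕ → ℕ) (n : ℕ) : shiftN (shiftN j n) 1 = shiftN j (n + 1) := by
  funext m; simp only [shiftN]; congr 1; omega

lemma binSeq.shiftN (hj : binSeq j) (n : ℕ) : binSeq (shiftN j n) :=
  fun m => hj (m + n)

lemma piL_div (hl0 : 0 < l) (hl1 : l < 1) (hj : binSeq j) :
    piL l j / l = j 0 + piL l (shiftN j 1) := by
  rw [piL, (summable_piL hl0.le hl1 hj).tsum_eq_zero_add, div_eq_iff hl0.ne', piL, add_mul,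
    ← tsum_mul_right]
  simp only [shiftN, pow_succ, zero_add, pow_zero, one_mul, mul_assoc]

end Expansion

def digitWeight (p : ℝ) (d : ℕ) : ℝ := if d = 0 then p else 1 - p

def cylinderWeight (p : ℝ) (i : ℕ → ℕ) (n : ℕ) : ℝ :=
  ∏ k ∈ Finset.range n, digitWeight p (i k)

section Weights

variable {p : ℝ}

lemma digitWeight_pos (hp0 : 0 < p) (hp1 : p < 1) (d : ℕ) : 0 < digitWeight p d := by
  unfold digitWeight; split_ifs <;> linarith

lemma digitWeight_nonneg (hp0 : 0 ≤ p) (hp1 : p ≤ 1) (d : ℕ) : 0 ≤ digitWeight p d := by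
  unfold digitWeight; split_ifs <;> linarith

lemma min_le_digitWeight (d : ℕ) : min p (1 - p) ≤ digitWeight p d := by
  unfold digitWeight; split_ifs
  exacts [min_le_left _ _, min_le_right _ _]

lemma cylinderWeight_pos (hp0 : 0 < p) (hp1 : p < 1) (i : ℕ → ℕ) (n : ℕ) :
    0 < cylinderWeight p i n :=
  Finset.prod_pos fun _ _ => digitWeight_pos hp0 hp1 _

lemma log_cylinderWeight (hp0 : 0 < p) (hp1 : p < 1) (i : ℕ → ℕ) (n : ℕ) :
    log (cylinderWeight p i n) =
      countZeros i n * log p + (n - countZeros i n) * log (1 - p) := by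
  have hcard : (n : ℝ) = countZeros i n + ((Finset.range n).filter fun m => ¬i m = 0).card := by
    exact_mod_cast ((Finset.card_range n).symm.trans
      (Finset.card_filter_add_card_filter_not (s := Finset.range n) _).symm)
  rw [cylinderWeight, log_prod fun k _ => (digitWeight_pos hp0 hp1 _).ne']
  simp only [digitWeight, apply_ite log, Finset.sum_ite, Finset.sum_const, nsmul_eq_mul]
  rw [hcard, countZeros]
  ring

lemma tendsto_log_cylinderWeight_div (hp0 : 0 < p) (hp1 : p < 1) {i : ℕ → ℕ} {r : ℝ}
    (hfreq : Tendsto (fun n : ℕ => (countZeros i n : ℝ) / n) atTop (𝓝 r)) :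
    Tendsto (fun n : ℕ => log (cylinderWeight p i n) / n) atTop
      (𝓝 (r * log p + (1 - r) * log (1 - p))) := by
  refine ((hfreq.mul_const _).add ((tendsto_const_nhds.sub hfreq).mul_const _)).congr' ?_
  filter_upwards [eventually_ne_atTop 0] with n hn
  rw [log_cylinderWeight hp0 hp1]
  field_simp [Nat.cast_ne_zero.mpr hn]

end Weights

/-- `ν_λ^p`: the invariant measure of the maps `x ↦ λ (x + d)`, `d ∈ {0, 1}`, with weights `p`
and `1 - p`. -/
def IsSelfSimilarMeasure (l p : ℝ) (ν : Measure ℝ) : Prop :=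
  ν = ENNReal.ofReal p • ν.map (fun x => l * (x + 0)) +
    ENNReal.ofReal (1 - p) • ν.map (fun x => l * (x + 1))

lemma preimage_mul_add_ball {l : ℝ} (hl0 : 0 < l) (c z ρ : ℝ) :
    (fun y => l * (y + c)) ⁻¹' ball z ρ = ball (z / l - c) (ρ / l) := by
  have key : ∀ y : ℝ, (y - (z / l - c)) * l = l * (y + c) - z := fun y => by
    field_simp; ring
  ext y
  simp only [mem_preimage, mem_ball, Real.dist_eq, lt_div_iff₀ hl0]
  rw [← abs_of_pos hl0, ← abs_mul, abs_of_pos hl0, key]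

lemma measure_ball_eq_zero_of_le {ν : Measure ℝ} {a b : ℝ} (hsupp : ν (Icc a b)ᶜ = 0)
    {z ρ : ℝ} (h : z + ρ ≤ a ∨ b ≤ z - ρ) : ν (ball z ρ) = 0 := by
  refine measure_mono_null (fun y hy => ?_) hsupp
  rw [Real.ball_eq_Ioo] at hy
  intro hyab
  rcases h with h | h
  · linarith [hy.2, hyab.1]
  · linarith [hy.1, hyab.2]

section SelfSimilar

variable {l p : ℝ} {ν : Measure ℝ}

lemma IsSelfSimilarMeasure.measureReal_ball [IsFiniteMeasure ν]
    (hν : IsSelfSimilarMeasure l p ν) (hl0 : 0 < l) (hp0 : 0 ≤ p) (hp1 : p ≤ 1) (z ρ : ℝ) :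
    ν.real (ball z ρ) =
      p * ν.real (ball (z / l) (ρ / l)) + (1 - p) * ν.real (ball (z / l - 1) (ρ / l)) := by
  have hmeas : ∀ c : ℝ, Measurable fun x : ℝ => l * (x + c) :=
    fun c => (measurable_id.add_const c).const_mul l
  have h := congrArg (fun μ : Measure ℝ => μ.real (ball z ρ)) hν
  simp only [measureReal_def, Measure.add_apply, Measure.smul_apply, smul_eq_mul,
    Measure.map_apply (hmeas _) measurableSet_ball, preimage_mul_add_ball hl0, sub_zero] at h
  rw [measureReal_def, h, ENNReal.toReal_add (by finiteness) (by finiteness), ENNReal.toReal_mul,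
    ENNReal.toReal_mul, ENNReal.toReal_ofReal hp0, ENNReal.toReal_ofReal (by linarith)]
  rfl

lemma IsSelfSimilarMeasure.le_measureReal_ball_piL [IsFiniteMeasure ν]
    (hν : IsSelfSimilarMeasure l p ν) (hl0 : 0 < l) (hl1 : l < 1) (hp0 : 0 ≤ p) (hp1 : p ≤ 1)
    {j : ℕ → ℕ} (hj : binSeq j) (ρ : ℝ) :
    digitWeight p (j 0) * ν.real (ball (piL l (shiftN j 1)) (ρ / l)) ≤
      ν.real (ball (piL l j) ρ) := by
  have hdiv := piL_div hl0 hl1 hj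
  have h1p : 0 ≤ 1 - p := by linarith
  rw [hν.measureReal_ball hl0 hp0 hp1 (piL l j), hdiv, digitWeight]
  rcases Nat.le_one_iff_eq_zero_or_eq_one.mp (hj 0) with h | h <;>
    simp only [h, Nat.cast_zero, Nat.cast_one, zero_add, add_sub_cancel_left, if_true,
      one_ne_zero, if_false]
  · exact le_add_of_nonneg_right (by positivity)
  · exact le_add_of_nonneg_left (by positivity)

/-- The separation keeps the ball away from the image of the other first-level map, so only one
term of the self-similarity equation survives. -/
lemma IsSelfSimilarMeasure.measureReal_ball_piL_of_separated [IsFiniteMeasure ν]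
    (hν : IsSelfSimilarMeasure l p ν) (hsupp : ν (Icc 0 (l / (1 - l)))ᶜ = 0)
    (hl0 : 0 < l) (hl1 : l < 1) (hp0 : 0 ≤ p) (hp1 : p ≤ 1) {δ ρ : ℝ} (hρ : ρ ≤ δ)
    {j : ℕ → ℕ} (hj : binSeq j) (h0 : j 0 = 0 → piL l j ≤ l - δ)
    (h1 : j 0 = 1 → piL l j ≥ l ^ 2 / (1 - l) + δ) :
    ν.real (ball (piL l j) ρ) =
      digitWeight p (j 0) * ν.real (ball (piL l (shiftN j 1)) (ρ / l)) := by
  have hdiv := piL_div hl0 hl1 hj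
  rw [hν.measureReal_ball hl0 hp0 hp1, hdiv, digitWeight]
  rcases Nat.le_one_iff_eq_zero_or_eq_one.mp (hj 0) with h | h
  · have hnull : ν (ball (piL l (shiftN j 1) - 1) (ρ / l)) = 0 := by
      refine measure_ball_eq_zero_of_le hsupp (.inl ?_)
      have : (piL l j + ρ) / l ≤ 1 := (div_le_one hl0).mpr (by linarith [h0 h])
      rw [h, Nat.cast_zero, zero_add] at hdiv
      rw [add_div, hdiv] at this
      linarith
    simp [h, measureReal_def, hnull]
  · have hnull : ν (ball (piL l (shiftN j 1) + 1) (ρ / l)) = 0 := by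
      refine measure_ball_eq_zero_of_le hsupp (.inr ?_)
      have : l / (1 - l) ≤ (piL l j - ρ) / l := by
        rw [le_div_iff₀ hl0, div_mul_eq_mul_div, ← sq]
        linarith [h1 h]
      rw [h, Nat.cast_one, add_comm] at hdiv
      rw [sub_div, hdiv] at this
      linarith
    simp [h, measureReal_def, hnull, add_comm]

lemma IsSelfSimilarMeasure.measureReal_ball_piL_iterate [IsFiniteMeasure ν]
    (hν : IsSelfSimilarMeasure l p ν) (hsupp : ν (Icc 0 (l / (1 - l)))ᶜ = 0)
    (hl0 : 0 < l) (hl1 : l < 1) (hp0 : 0 ≤ p) (hp1 : p ≤ 1) {δ : ℝ}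
    {i : ℕ → ℕ} (hi : binSeq i)
    (horb : ∀ n : ℕ, (i n = 0 → piL l (shiftN i n) ≤ l - δ) ∧
      (i n = 1 → piL l (shiftN i n) ≥ l ^ 2 / (1 - l) + δ))
    (n : ℕ) {ρ : ℝ} (hρ0 : 0 ≤ ρ) (hρ : ρ ≤ δ) :
    ν.real (ball (piL l i) (ρ * l ^ n)) =
      cylinderWeight p i n * ν.real (ball (piL l (shiftN i n)) ρ) := by
  induction n generalizing ρ with
  | zero => simp [cylinderWeight]
  | succ n ih =>
    have hρl : ρ * l ≤ ρ := mul_le_of_le_one_right hρ0 hl1.le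
    have hstep := hν.measureReal_ball_piL_of_separated hsupp hl0 hl1 hp0 hp1 (hρl.trans hρ)
      (hi.shiftN n) (by simpa using (horb n).1) (by simpa using (horb n).2)
    rw [pow_succ', ← mul_assoc, ih (by positivity) (hρl.trans hρ), hstep, shiftN_shiftN_one,
      mul_div_cancel_right₀ _ hl0.ne', shiftN_apply_zero, cylinderWeight, cylinderWeight,
      Finset.prod_range_succ, mul_assoc]

lemma IsSelfSimilarMeasure.pow_le_measureReal_ball_piL [IsProbabilityMeasure ν]
    (hν : IsSelfSimilarMeasure l p ν) (hsupp : ν (Icc 0 (l / (1 - l)))ᶜ = 0)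
    (hl0 : 0 < l) (hl1 : l < 1) (hp0 : 0 ≤ p) (hp1 : p ≤ 1) (m : ℕ)
    {j : ℕ → ℕ} (hj : binSeq j)
    {ε : ℝ} (hε : l / (1 - l) * l ^ m < ε) :
    min p (1 - p) ^ m ≤ ν.real (ball (piL l j) ε) := by
  induction m generalizing j ε with
  | zero =>
    have hIcc : Icc 0 (l / (1 - l)) ⊆ ball (piL l j) ε := by
      intro z hz
      have hj' := piL_mem_Icc hl0.le hl1 hj
      rw [pow_zero, mul_one] at hε
      rw [Real.ball_eq_Ioo]
      constructor <;> linarith [hz.1, hz.2, hj'.1, hj'.2]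
    have hfull : ν.real (Icc 0 (l / (1 - l))) = 1 := by
      rw [measureReal_def, (prob_compl_eq_zero_iff measurableSet_Icc).mp hsupp,
        ENNReal.toReal_one]
    rw [pow_zero, ← hfull]
    exact measureReal_mono hIcc
  | succ m ih =>
    have hεl : l / (1 - l) * l ^ m < ε / l := by
      rw [lt_div_iff₀ hl0, mul_assoc, ← pow_succ]
      exact hε
    calc min p (1 - p) ^ (m + 1) = min p (1 - p) * min p (1 - p) ^ m := pow_succ' _ _
      _ ≤ digitWeight p (j 0) * ν.real (ball (piL l (shiftN j 1)) (ε / l)) :=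
        mul_le_mul (min_le_digitWeight _) (ih (hj.shiftN 1) hεl) (by positivity)
          (digitWeight_nonneg hp0 hp1 _)
      _ ≤ ν.real (ball (piL l j) ε) := hν.le_measureReal_ball_piL hl0 hl1 hp0 hp1 hj ε

lemma IsSelfSimilarMeasure.exists_measureReal_ball_piL_bounds [IsProbabilityMeasure ν]
    (hν : IsSelfSimilarMeasure l p ν) (hsupp : ν (Icc 0 (l / (1 - l)))ᶜ = 0)
    (hl0 : 0 < l) (hl1 : l < 1) (hp0 : 0 < p) (hp1 : p < 1) {δ : ℝ} (hδ : 0 < δ)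
    {i : ℕ → ℕ} (hi : binSeq i)
    (horb : ∀ n : ℕ, (i n = 0 → piL l (shiftN i n) ≤ l - δ) ∧
      (i n = 1 → piL l (shiftN i n) ≥ l ^ 2 / (1 - l) + δ)) :
    ∃ c > 0, ∀ n : ℕ, c * cylinderWeight p i n ≤ ν.real (ball (piL l i) (δ * l ^ n)) ∧
      ν.real (ball (piL l i) (δ * l ^ n)) ≤ cylinderWeight p i n := by
  have hK : 0 < l / (1 - l) := div_pos hl0 (by linarith)
  obtain ⟨m, hm⟩ := exists_pow_lt_of_lt_one (div_pos hδ hK) hl1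
  refine ⟨min p (1 - p) ^ m, pow_pos (lt_min hp0 (by linarith)) m, fun n => ?_⟩
  rw [hν.measureReal_ball_piL_iterate hsupp hl0 hl1 hp0.le hp1.le hi horb n hδ.le le_rfl,
    mul_comm _ (cylinderWeight p i n)]
  have hW := cylinderWeight_pos hp0 hp1 i n
  constructor
  · exact mul_le_mul_of_nonneg_left (hν.pow_le_measureReal_ball_piL hsupp hl0 hl1 hp0.le hp1.le
      m (hi.shiftN n) ((lt_div_iff₀' hK).mp hm)) hW.le
  · exact mul_le_of_le_one_right hW.le measureReal_le_one

end SelfSimilar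

lemma tendsto_add_div_natCast {u : ℕ → ℝ} {L : ℝ}
    (hu : Tendsto (fun n : ℕ => u n / n) atTop (𝓝 L)) (b : ℝ) (k : ℕ) :
    Tendsto (fun n : ℕ => (b + u (n + k)) / n) atTop (𝓝 L) := by
  have hb : Tendsto (fun n : ℕ => b / n) atTop (𝓝 0) :=
    tendsto_const_div_atTop_nhds_zero_nat b
  have hshift : Tendsto (fun n : ℕ => u (n + k) / (n + k : ℕ)) atTop (𝓝 L) :=
    hu.comp (tendsto_add_atTop_nat k)
  have hratio : Tendsto (fun n : ℕ => ((n : ℝ) + k) / n) atTop (𝓝 1) := by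
    have h := (tendsto_natCast_div_add_atTop (k : ℝ)).inv₀ one_ne_zero
    simp only [inv_one] at h
    exact h.congr fun n => inv_div _ _
  have h := hb.add (hshift.mul hratio)
  rw [zero_add, mul_one] at h
  refine h.congr' ?_
  filter_upwards [eventually_ne_atTop 0] with n hn
  have hn' : (n : ℝ) ≠ 0 := Nat.cast_ne_zero.mpr hn
  have hnk : ((n + k : ℕ) : ℝ) ≠ 0 := by positivity
  push_cast at hnk ⊢
  field_simp

lemma exists_tendsto_geometric_index {a l : ℝ} (ha : 0 < a) (hl0 : 0 < l) (hl1 : l < 1) :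
    ∃ N : ℝ → ℕ, Tendsto N (𝓝[>] 0) atTop ∧
      ∀ᶠ ρ in 𝓝[>] 0, a * l ^ (N ρ + 1) < ρ ∧ ρ ≤ a * l ^ N ρ := by
  have hnear : ∀ ρ : ℝ, ∃ n : ℕ, 0 < ρ → ρ ≤ a → a * l ^ (n + 1) < ρ ∧ ρ ≤ a * l ^ n := by
    intro ρ
    by_cases hρ : 0 < ρ ∧ ρ ≤ a
    · obtain ⟨n, hn⟩ := exists_nat_pow_near_of_lt_one (div_pos hρ.1 ha)
        ((div_le_one ha).mpr hρ.2) hl0 hl1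
      refine ⟨n, fun _ _ => ⟨?_, ?_⟩⟩
      · rw [← lt_div_iff₀' ha]; exact hn.1
      · rw [← div_le_iff₀' ha]; exact hn.2
    · exact ⟨0, fun h0 ha' => absurd ⟨h0, ha'⟩ hρ⟩
  choose N hN using hnear
  have hsmall : ∀ K : ℕ, ∀ᶠ ρ in 𝓝[>] 0, 0 < ρ ∧ ρ < a * l ^ K := fun K =>
    (eventually_mem_nhdsWithin (a := (0 : ℝ)) (s := Ioi 0)).and
      (nhdsWithin_le_nhds (gt_mem_nhds (by positivity : (0 : ℝ) < a * l ^ K)))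
  have hbracket : ∀ᶠ ρ in 𝓝[>] 0, a * l ^ (N ρ + 1) < ρ ∧ ρ ≤ a * l ^ N ρ := by
    filter_upwards [hsmall 0] with ρ hρ
    exact hN ρ hρ.1 (by simpa using hρ.2.le)
  refine ⟨N, tendsto_atTop.mpr fun K => ?_, hbracket⟩
  filter_upwards [hsmall K, hbracket] with ρ hρ hbr
  have hlt : l ^ (N ρ + 1) < l ^ K := lt_of_mul_lt_mul_left (hbr.1.trans hρ.2) ha.le
  exact Nat.lt_succ_iff.mp ((pow_lt_pow_iff_right_of_lt_one₀ hl0 hl1).mp hlt)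

theorem tendsto_log_div_log_of_geometric_bounds {f : ℝ → ℝ} (hf : Monotone f) {a l c L : ℝ}
    (ha : 0 < a) (hl0 : 0 < l) (hl1 : l < 1) (hc : 0 < c) {W : ℕ → ℝ} (hW : ∀ n, 0 < W n)
    (hbounds : ∀ n, c * W n ≤ f (a * l ^ n) ∧ f (a * l ^ n) ≤ W n)
    (hW_lim : Tendsto (fun n : ℕ => log (W n) / n) atTop (𝓝 L)) :
    Tendsto (fun ρ => log (f ρ) / log ρ) (𝓝[>] 0) (𝓝 (L / log l)) := by
  obtain ⟨N, hN, hbracket⟩ := exists_tendsto_geometric_index ha hl0 hl1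
  have hlog_l : Tendsto (fun n : ℕ => (n * log l) / n) atTop (𝓝 (log l)) :=
    tendsto_const_nhds.congr' <| (eventually_ne_atTop 0).mono fun n hn => by
      field_simp [Nat.cast_ne_zero.mpr hn]
  -- Dividing both logarithms by the scale index `N ρ` turns the bounds into two squeezes.
  have hf_lower : ∀ᶠ ρ in 𝓝[>] 0, c * W (N ρ + 1) ≤ f ρ :=
    hbracket.mono fun ρ hρ => (hbounds _).1.trans (hf hρ.1.le)
  have hnum : Tendsto (fun ρ => log (f ρ) / N ρ) (𝓝[>] 0) (𝓝 L) := by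
    refine tendsto_of_tendsto_of_tendsto_of_le_of_le'
      ((tendsto_add_div_natCast hW_lim (log c) 1).comp hN)
      ((tendsto_add_div_natCast hW_lim 0 0).comp hN) ?_ ?_ <;>
    filter_upwards [hbracket, hf_lower] with ρ hρ hlow <;>
    refine div_le_div_of_nonneg_right ?_ (Nat.cast_nonneg _)
    · have hcW : 0 < c * W (N ρ + 1) := mul_pos hc (hW _)
      rw [← log_mul hc.ne' (hW _).ne']
      exact log_le_log hcW hlow
    · simp only [zero_add, add_zero]
      exact log_le_log ((mul_pos hc (hW _)).trans_le hlow) ((hf hρ.2).trans (hbounds _).2)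
  have hden : Tendsto (fun ρ => log ρ / N ρ) (𝓝[>] 0) (𝓝 (log l)) := by
    refine tendsto_of_tendsto_of_tendsto_of_le_of_le'
      ((tendsto_add_div_natCast hlog_l (log a) 1).comp hN)
      ((tendsto_add_div_natCast hlog_l (log a) 0).comp hN) ?_ ?_ <;>
    filter_upwards [hbracket] with ρ hρ <;>
    refine div_le_div_of_nonneg_right ?_ (Nat.cast_nonneg _)
    · have := log_le_log (by positivity) hρ.1.le
      rwa [log_mul ha.ne' (by positivity), log_pow] at this
    · have hρ0 : 0 < ρ := (by positivity : 0 < a * l ^ (N ρ + 1)).trans hρ.1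
      have := log_le_log hρ0 hρ.2
      rw [log_mul ha.ne' (by positivity), log_pow] at this
      simpa only [Nat.add_zero] using this
  refine (hnum.div hden (log_neg hl0 hl1).ne).congr' ?_
  filter_upwards [hN.eventually_ne_atTop 0] with ρ hρ
  exact div_div_div_cancel_right₀ (Nat.cast_ne_zero.mpr hρ) _ _

theorem stmt8_general (l p δ r : ℝ) (hl0 : 0 < l) (hl1 : l < 1) (hp0 : 0 < p) (hp1 : p < 1)
    (hδ : 0 < δ)
    (ν : Measure ℝ) [IsProbabilityMeasure ν]
    (hss : ν = ENNReal.ofReal p • ν.map (fun x => l * (x + 0)) +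
      ENNReal.ofReal (1 - p) • ν.map (fun x => l * (x + 1)))
    (hsupp : ν (Set.Icc 0 (l / (1 - l)))ᶜ = 0)
    (x : ℝ)
    (i : ℕ → ℕ) (hib : binSeq i) (hix : piL l i = x)
    (horb : ∀ n : ℕ, (i n = 0 → piL l (shiftN i n) ≤ l - δ) ∧
      (i n = 1 → piL l (shiftN i n) ≥ l ^ 2 / (1 - l) + δ))
    (hfreq : Filter.Tendsto (fun n : ℕ => (countZeros i n : ℝ) / n) Filter.atTop (nhds r)) :
    Filter.Tendsto (fun ρ : ℝ => Real.log (ν (Metric.ball x ρ)).toReal / Real.log ρ)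
      (nhdsWithin 0 (Set.Ioi 0))
      (nhds ((r * Real.log p + (1 - r) * Real.log (1 - p)) / Real.log l)) := by
  obtain ⟨c, hc, hbounds⟩ := IsSelfSimilarMeasure.exists_measureReal_ball_piL_bounds (ν := ν)
    hss hsupp hl0 hl1 hp0 hp1 hδ hib horb
  subst hix
  exact tendsto_log_div_log_of_geometric_bounds
    (fun _ _ h => measureReal_mono (ball_subset_ball h)) hδ hl0 hl1 hc
    (cylinderWeight_pos hp0 hp1 i) hbounds (tendsto_log_cylinderWeight_div hp0 hp1 hfreq)

theorem stmt8 (l p δ r : ℝ) (hl0 : 0 < l) (hl1 : l < 1) (hp0 : 0 < p) (hp1 : p < 1)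
    (hδ : 0 < δ)
    (ν : Measure ℝ) [IsProbabilityMeasure ν]
    (hss : ν = ENNReal.ofReal p • ν.map (fun x => l * (x + 0)) +
      ENNReal.ofReal (1 - p) • ν.map (fun x => l * (x + 1)))
    (hsupp : ν (Set.Icc 0 (l / (1 - l)))ᶜ = 0)
    (x : ℝ) (hx : x ∈ Set.Icc 0 (l / (1 - l)))
    (i : ℕ → ℕ) (hib : binSeq i) (hix : piL l i = x)
    (huniq : ∀ j : ℕ → ℕ, binSeq j → piL l j = x → j = i)
    (horb : ∀ n : ℕ, (i n = 0 → piL l (shiftN i n) ≤ l - δ) ∧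
      (i n = 1 → piL l (shiftN i n) ≥ l ^ 2 / (1 - l) + δ))
    (hfreq : Filter.Tendsto (fun n : ℕ => (countZeros i n : ℝ) / n) Filter.atTop (nhds r)) :
    Filter.Tendsto (fun ρ : ℝ => Real.log (ν (Metric.ball x ρ)).toReal / Real.log ρ)
      (nhdsWithin 0 (Set.Ioi 0))
      (nhds ((r * Real.log p + (1 - r) * Real.log (1 - p)) / Real.log l)) :=
  stmt8_general l p δ r hl0 hl1 hp0 hp1 hδ ν hss hsupp x i hib hix horb hfreq
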